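/- Let ω be the standard symplectic form on ℝ^{2n}. Let φ : ℝ × ℝ^{2n} → ℝ^{2n} and F : ℝ × ℝ^{2n} → ℝ be C² in all variables, and suppose that for all t, x and all y ∈ ℝ^{2n}: (i) ∇_x F(t,x)·y = ½ω(φ(t,x), D_x φ(t,x)y) − ½ω(x, y) (each φ(t,·) lifts to a volume preserving derivable map of the Heisenberg group), and (ii) ∂F/∂t(t,x) = ½ω(φ(t,x), ∂φ/∂t(t,x)) (the lifted flow is horizontal). Then the flow is constant: ∂φ/∂t(t,x) = 0 for all t, x. -/

import Mathlib

open Filter Topology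

/-- `ℝ^{2n}`, as a Euclidean space. -/
abbrev Esp (n : ℕ) := EuclideanSpace ℝ (Fin (2 * n))

/-- The standard complex structure `J` on `ℝ^{2n}`. -/
noncomputable def stdJ (n : ℕ) (x : Esp n) : Esp n :=
  WithLp.toLp 2 fun i => if h : (i : ℕ) < n then -x ⟨(i : ℕ) + n, by omega⟩
    else x ⟨(i : ℕ) - n, by have := i.isLt; omega⟩

/-- The standard symplectic form `ω(x,y) = ⟨Jx, y⟩` on `ℝ^{2n}`. -/
noncomputable def stdOmega (n : ℕ) (x y : Esp n) : ℝ :=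
  inner ℝ (stdJ n x) y

/-- Multiplication in the Heisenberg group `H(n) = ℝ^{2n} × ℝ`. -/
noncomputable def Hmul (n : ℕ) (p q : Esp n × ℝ) : Esp n × ℝ :=
  (p.1 + q.1, p.2 + q.2 + (1 / 2) * stdOmega n p.1 q.1)

/-- Inverse in the Heisenberg group. -/
noncomputable def Hinv (n : ℕ) (p : Esp n × ℝ) : Esp n × ℝ :=
  (-p.1, -p.2)

/-- The dilatations `δ_ε(x, x̄) = (εx, ε²x̄)` of the Heisenberg group. -/
noncomputable def Hdil (n : ℕ) (ε : ℝ) (p : Esp n × ℝ) : Esp n × ℝ :=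
  (ε • p.1, ε ^ 2 * p.2)

/-!
Conditions (i) and (ii) say that the one-form `½ω(φ, dφ) − ½ω(x, dx)` on `ℝ × ℝ^{2n}` is exact,
equal to `dF`. Its exterior derivative therefore vanishes (symmetry of the second derivatives
of `F` and `φ`), i.e. `ω(Dφ v, Dφ w) = ω(v_x, w_x)` for all `v, w ∈ ℝ × ℝ^{2n}`. In the space
directions this says that `D_xφ` is symplectic, hence invertible; with `v = ∂ₜ` it says that
`∂ₜφ` is `ω`-orthogonal to the image of `D_xφ`, which is everything, so `∂ₜφ = 0`.
-/

open ContinuousLinearMap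

section PartialDerivatives

variable {𝕜 E F G : Type*} [NontriviallyNormedField 𝕜] [NormedAddCommGroup E] [NormedSpace 𝕜 E]
  [NormedAddCommGroup F] [NormedSpace 𝕜 F] [NormedAddCommGroup G] [NormedSpace 𝕜 G]

theorem fderiv_comp_prodMk_right_apply {f : E × F → G} {a : E} {b : F}
    (hf : DifferentiableAt 𝕜 f (a, b)) (y : F) :
    fderiv 𝕜 (fun z => f (a, z)) b y = fderiv 𝕜 f (a, b) (0, y) := by
  have h : HasFDerivAt (fun z => f (a, z)) ((fderiv 𝕜 f (a, b)).comp (inr 𝕜 E F)) b :=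
    hf.hasFDerivAt.comp b (hasFDerivAt_prodMk_right a b)
  rw [h.fderiv]
  rfl

theorem deriv_comp_prodMk_left {f : 𝕜 × F → G} {a : 𝕜} {b : F}
    (hf : DifferentiableAt 𝕜 f (a, b)) :
    deriv (fun s => f (s, b)) a = fderiv 𝕜 f (a, b) (1, 0) := by
  have h : HasFDerivAt (fun s => f (s, b)) ((fderiv 𝕜 f (a, b)).comp (inl 𝕜 𝕜 F)) a :=
    hf.hasFDerivAt.comp a (hasFDerivAt_prodMk_left a b)
  rw [h.hasDerivAt.deriv]
  rfl

end PartialDerivatives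

section ClosedOneForm

variable {𝕜 E W : Type*} [RCLike 𝕜] [NormedAddCommGroup E] [NormedSpace 𝕜 E]
  [NormedAddCommGroup W] [NormedSpace 𝕜 W]

theorem fderiv_fderiv_apply_of_fderiv_eq (B : W →L[𝕜] W →L[𝕜] 𝕜) (L : E →L[𝕜] E →L[𝕜] 𝕜)
    {φ : E → W} {F : E → 𝕜} (hφ : ContDiff 𝕜 2 φ)
    (h : ∀ q, fderiv 𝕜 F q = (B (φ q)).comp (fderiv 𝕜 φ q) + L q) (p v w : E) :
    fderiv 𝕜 (fderiv 𝕜 F) p v w =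
      B (fderiv 𝕜 φ p v) (fderiv 𝕜 φ p w) + B (φ p) (fderiv 𝕜 (fderiv 𝕜 φ) p v w) + L v w := by
  have hBφ : HasFDerivAt (fun q => B (φ q)) (B.comp (fderiv 𝕜 φ p)) p :=
    B.hasFDerivAt.comp p ((hφ.differentiable two_ne_zero) p).hasFDerivAt
  have hDφ : HasFDerivAt (fderiv 𝕜 φ) (fderiv 𝕜 (fderiv 𝕜 φ) p) p :=
    ((hφ.fderiv_right (m := 1) le_rfl).differentiable one_ne_zero p).hasFDerivAt
  have hsum : HasFDerivAt (fun q => (B (φ q)).comp (fderiv 𝕜 φ q) + L q) _ p :=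
    (hBφ.clm_comp hDφ).add L.hasFDerivAt
  rw [funext h, hsum.fderiv]
  simp only [add_apply, coe_comp, Function.comp_apply, compL_apply, flip_apply]
  ring

/-- This is `d(dF) = 0` for `dF = B(φ, dφ) + L(·, d·)`. -/
theorem fderiv_apply_add_comm_of_fderiv_eq (B : W →L[𝕜] W →L[𝕜] 𝕜) (L : E →L[𝕜] E →L[𝕜] 𝕜)
    {φ : E → W} {F : E → 𝕜} (hφ : ContDiff 𝕜 2 φ) (hF : ContDiff 𝕜 2 F)
    (h : ∀ q, fderiv 𝕜 F q = (B (φ q)).comp (fderiv 𝕜 φ q) + L q) (p v w : E) :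
    B (fderiv 𝕜 φ p v) (fderiv 𝕜 φ p w) + L v w = B (fderiv 𝕜 φ p w) (fderiv 𝕜 φ p v) + L w v := by
  have hFsymm := hF.contDiffAt.isSymmSndFDerivAt (x := p) (by simp) v w
  have hφsymm := hφ.contDiffAt.isSymmSndFDerivAt (x := p) (by simp) v w
  rw [fderiv_fderiv_apply_of_fderiv_eq B L hφ h, fderiv_fderiv_apply_of_fderiv_eq B L hφ h,
    hφsymm] at hFsymm
  linear_combination hFsymm

end ClosedOneForm

section StdSymplectic

variable {n : ℕ}

def halfSwap (n : ℕ) (i : Fin (2 * n)) : Fin (2 * n) :=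
  if h : (i : ℕ) < n then ⟨i + n, by omega⟩ else ⟨i - n, by have := i.isLt; omega⟩

def halfSign (n : ℕ) (i : Fin (2 * n)) : ℝ :=
  if (i : ℕ) < n then -1 else 1

lemma halfSwap_val (i : Fin (2 * n)) :
    (halfSwap n i : ℕ) = if (i : ℕ) < n then (i : ℕ) + n else (i : ℕ) - n := by
  unfold halfSwap
  split_ifs <;> rfl

lemma halfSwap_involutive (n : ℕ) : Function.Involutive (halfSwap n) := by
  intro i
  ext
  rw [halfSwap_val, halfSwap_val]
  split_ifs <;> omega

lemma halfSign_halfSwap (i : Fin (2 * n)) : halfSign n (halfSwap n i) = -halfSign n i := by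
  unfold halfSign
  rw [halfSwap_val]
  split_ifs <;> first | omega | norm_num

lemma halfSign_mul_self (i : Fin (2 * n)) : halfSign n i * halfSign n i = 1 := by
  unfold halfSign
  split_ifs <;> norm_num

lemma stdJ_apply (x : Esp n) (i : Fin (2 * n)) : stdJ n x i = halfSign n i * x (halfSwap n i) := by
  by_cases h : (i : ℕ) < n <;> simp [stdJ, halfSign, halfSwap, h]

lemma stdJ_stdJ (x : Esp n) : stdJ n (stdJ n x) = -x := by
  ext i
  rw [stdJ_apply, stdJ_apply, halfSign_halfSwap, halfSwap_involutive, PiLp.neg_apply,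
    ← mul_assoc, mul_neg, halfSign_mul_self, neg_one_mul]

lemma stdOmega_eq_sum (x y : Esp n) :
    stdOmega n x y = ∑ i, halfSign n i * x (halfSwap n i) * y i := by
  simp only [stdOmega, PiLp.inner_apply, stdJ_apply, RCLike.inner_apply, conj_trivial]
  exact Finset.sum_congr rfl fun i _ => mul_comm _ _

lemma stdOmega_antisymm (x y : Esp n) : stdOmega n x y = -stdOmega n y x := by
  rw [stdOmega_eq_sum, stdOmega_eq_sum, ← Equiv.sum_comp (halfSwap_involutive n).toPerm,
    ← Finset.sum_neg_distrib]
  refine Finset.sum_congr rfl fun i _ => ?_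
  simp only [Function.Involutive.coe_toPerm, halfSign_halfSwap, halfSwap_involutive n i]
  ring

noncomputable def stdJL (n : ℕ) : Esp n →L[ℝ] Esp n :=
  LinearMap.toContinuousLinearMap
    { toFun := stdJ n
      map_add' x y := by ext i; simp only [stdJ_apply, PiLp.add_apply]; ring
      map_smul' c x := by
        ext i
        simp only [stdJ_apply, PiLp.smul_apply, smul_eq_mul, RingHom.id_apply]
        ring }

@[simp] lemma stdJL_apply (x : Esp n) : stdJL n x = stdJ n x := rfl

lemma eq_zero_of_forall_stdOmega_eq_zero {x : Esp n} (h : ∀ y, stdOmega n x y = 0) : x = 0 := by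
  have hJ : stdJ n x = 0 := inner_self_eq_zero.mp (h (stdJ n x))
  have hJJ := congrArg (stdJL n) hJ
  rwa [map_zero, stdJL_apply, stdJ_stdJ, neg_eq_zero] at hJJ

noncomputable def stdOmegaL (n : ℕ) : Esp n →L[ℝ] Esp n →L[ℝ] ℝ := (innerSL ℝ).comp (stdJL n)

@[simp] lemma stdOmegaL_apply (x y : Esp n) : stdOmegaL n x y = stdOmega n x y := rfl

@[simp] lemma stdOmega_zero_left (y : Esp n) : stdOmega n 0 y = 0 := by
  rw [← stdOmegaL_apply, map_zero, zero_apply]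

def IsHorizontalGenerating (φ : ℝ × Esp n → Esp n) (F : ℝ × Esp n → ℝ) : Prop :=
  (∀ (t : ℝ) (x y : Esp n), (inner ℝ (gradient (fun z => F (t, z)) x) y : ℝ) =
      (1 / 2) * stdOmega n (φ (t, x)) (fderiv ℝ (fun z => φ (t, z)) x y)
        - (1 / 2) * stdOmega n x y) ∧
    ∀ (t : ℝ) (x : Esp n),
      deriv (fun s => F (s, x)) t = (1 / 2) * stdOmega n (φ (t, x)) (deriv (fun s => φ (s, x)) t)

theorem fderiv_eq_of_isHorizontalGenerating {φ : ℝ × Esp n → Esp n} {F : ℝ × Esp n → ℝ}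
    (hφ : Differentiable ℝ φ) (hF : Differentiable ℝ F)
    (hgen : IsHorizontalGenerating φ F) (q : ℝ × Esp n) :
    fderiv ℝ F q = ((1 / 2 : ℝ) • stdOmegaL n (φ q)).comp (fderiv ℝ φ q) +
      (-(1 / 2 : ℝ) • (stdOmegaL n).bilinearComp (snd ℝ ℝ (Esp n)) (snd ℝ ℝ (Esp n))) q := by
  obtain ⟨hi, hii⟩ := hgen
  obtain ⟨t, x⟩ := q
  refine prod_ext (ext_ring ?_) (ext fun y => ?_)
  · have h := hii t x
    rw [deriv_comp_prodMk_left (hF _), deriv_comp_prodMk_left (hφ _)] at h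
    simpa [stdOmega] using h
  · have h := hi t x y
    rw [gradient, InnerProductSpace.toDual_symm_apply, fderiv_comp_prodMk_right_apply (hF _),
      fderiv_comp_prodMk_right_apply (hφ _)] at h
    simp only [comp_apply, inr_apply, h, one_div, smul_comp, smul_apply, neg_smul, add_comp,
      neg_comp, add_apply, stdOmegaL_apply, smul_eq_mul, neg_apply, bilinearComp_apply, coe_snd']
    ring

theorem surjective_of_forall_stdOmega_map_map (T : Esp n →L[ℝ] Esp n)
    (hT : ∀ y z, stdOmega n (T y) (T z) = stdOmega n y z) : Function.Surjective T := by
  refine LinearMap.injective_iff_surjective.mp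
    ((injective_iff_map_eq_zero (T : Esp n →ₗ[ℝ] Esp n)).mpr fun y hy => ?_)
  refine eq_zero_of_forall_stdOmega_eq_zero fun z => ?_
  rw [← hT, show T y = 0 from hy, stdOmega_zero_left]

theorem stdOmega_fderiv_apply_fderiv_apply_of_isHorizontalGenerating {φ : ℝ × Esp n → Esp n}
    {F : ℝ × Esp n → ℝ} (hφ : ContDiff ℝ 2 φ) (hF : ContDiff ℝ 2 F)
    (hgen : IsHorizontalGenerating φ F) (p v w : ℝ × Esp n) :
    stdOmega n (fderiv ℝ φ p v) (fderiv ℝ φ p w) = stdOmega n v.2 w.2 := by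
  have h := fderiv_apply_add_comm_of_fderiv_eq ((1 / 2 : ℝ) • stdOmegaL n)
    (-(1 / 2 : ℝ) • (stdOmegaL n).bilinearComp (snd ℝ ℝ (Esp n)) (snd ℝ ℝ (Esp n))) hφ hF
    (fderiv_eq_of_isHorizontalGenerating (hφ.differentiable two_ne_zero)
      (hF.differentiable two_ne_zero) hgen)
    p v w
  simp only [FunLike.coe_smul, Pi.smul_apply, smul_eq_mul, stdOmegaL_apply, bilinearComp_apply,
    coe_snd'] at h
  rw [stdOmega_antisymm (fderiv ℝ φ p w), stdOmega_antisymm w.2] at h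
  linarith

end StdSymplectic

/-- A horizontal `C²` flow of lifts of symplectomorphisms of the Heisenberg group is
constant: if (i) each `F(t,·)` is a generating function of `φ(t,·)`
(`∇_xF(t,x)·y = ½ω(φ(t,x), D_xφ(t,x)y) − ½ω(x,y)`, so the lift is volume preserving and
derivable) and (ii) the lifted flow is horizontal
(`∂F/∂t(t,x) = ½ω(φ(t,x), ∂φ/∂t(t,x))`), then `∂φ/∂t = 0`. -/
theorem stmt_13 (n : ℕ)
    (φ : ℝ × Esp n → Esp n) (F : ℝ × Esp n → ℝ)
    (hφ : ContDiff ℝ 2 φ) (hF : ContDiff ℝ 2 F)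
    (hi : ∀ (t : ℝ) (x y : Esp n),
      (inner ℝ (gradient (fun z => F (t, z)) x) y : ℝ) =
        (1 / 2) * stdOmega n (φ (t, x)) (fderiv ℝ (fun z => φ (t, z)) x y)
          - (1 / 2) * stdOmega n x y)
    (hii : ∀ (t : ℝ) (x : Esp n),
      deriv (fun s => F (s, x)) t =
        (1 / 2) * stdOmega n (φ (t, x)) (deriv (fun s => φ (s, x)) t)) :
    ∀ (t : ℝ) (x : Esp n), deriv (fun s => φ (s, x)) t = 0 := by
  intro t x
  have hpres := stdOmega_fderiv_apply_fderiv_apply_of_isHorizontalGenerating hφ hF ⟨hi, hii⟩ (t, x)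
  have hT : Function.Surjective ((fderiv ℝ φ (t, x)).comp (inr ℝ ℝ (Esp n))) :=
    surjective_of_forall_stdOmega_map_map _ fun y z => hpres (0, y) (0, z)
  rw [deriv_comp_prodMk_left (hφ.differentiable two_ne_zero _)]
  refine eq_zero_of_forall_stdOmega_eq_zero fun w => ?_
  obtain ⟨y, rfl⟩ := hT w
  simpa using hpres (1, 0) (0, y)
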